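/- Every finite Sturmian word over {a,b} is uniquely determined, up to exchanging the letters a and b, by its oc-sequence: if u and v are finite Sturmian words with oc(u) = oc(v), then u = v or u is obtained from v by swapping a and b. -/

import Mathlib

/-!
Induction on the length. For a nonempty word `w` and letters `x ≠ y`, the words `w x` and `w y`
cannot both be closed: the shorter of the two borders without internal occurrence would reappear
inside the longer one. If both `w x` and `w y` are balanced, one of them is closed: with `v` the
longest border of `w` and `z` the letter following the prefix `v`, an internal occurrence of `v z`
in `w z` would yield either a border of `w` longer than `v`, or a right special factor of `w` that
is not a suffix; the latter contradicts balance, since comparing it with the suffix of `w` of the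
same length gives factors `a t a` and `b t b` with `a ≠ b`. So the last entry of the oc-sequence
determines the appended letter, once the first letter is fixed up to exchange.
-/

open scoped Classical

variable {α : Type*}

def IsBorder (u w : List α) : Prop := u <+: w ∧ u <:+ w ∧ u ≠ w

def InternalOcc (u w : List α) : Prop := ∃ p s : List α, p ≠ [] ∧ s ≠ [] ∧ w = p ++ u ++ s

def ClosedWord (w : List α) : Prop := w = [] ∨ ∃ u, IsBorder u w ∧ ¬ InternalOcc u w

noncomputable def minPer (w : List α) : ℕ :=
  if w = [] then 1 else sInf {p | ∃ v, IsBorder v w ∧ p = w.length - v.length}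

noncomputable def ocL (w : List α) : List ℕ :=
  (List.range w.length).map fun i => if ClosedWord (w.take (i+1)) then 1 else 0

def prefW (w : ℕ → α) (n : ℕ) : List α := (List.range n).map w

noncomputable def ocI (w : ℕ → α) : ℕ → ℕ := fun n =>
  if ClosedWord (prefW w (n+1)) then 1 else 0

def InfixAt (w : ℕ → α) (u : List α) (i : ℕ) : Prop :=
  u = (List.range u.length).map fun j => w (i + j)

def RecurrentWord (w : ℕ → α) : Prop :=
  ∀ u : List α, (∃ i, InfixAt w u i) → ∀ N, ∃ i, N ≤ i ∧ InfixAt w u i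

def UltPeriodic (s : ℕ → α) : Prop := ∃ p, 0 < p ∧ ∃ N, ∀ n, N ≤ n → s (n + p) = s n

def PerWord (s : ℕ → α) : Prop := ∃ p, 0 < p ∧ ∀ n, s (n + p) = s n

def OccurrenceAt (u w : List α) (i : ℕ) : Prop := i + u.length ≤ w.length ∧ u <+: w.drop i

def RepeatedIn (u w : List α) : Prop := ∃ i j, i < j ∧ OccurrenceAt u w i ∧ OccurrenceAt u w j

def CompleteReturnTo (w u : List α) : Prop :=
  u <+: w ∧ u <:+ w ∧ u ≠ w ∧ ∀ i, OccurrenceAt u w i → i = 0 ∨ i = w.length - u.length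

def BalancedWord (w : List Bool) : Prop :=
  ∀ u v : List Bool, u <:+: w → v <:+: w → u.length = v.length →
    ((u.count true : ℤ) - v.count true).natAbs ≤ 1

def RightSpecialSturmian (w : List Bool) : Prop := ∀ x : Bool, BalancedWord (w ++ [x])

def stdSeq (d : ℕ → ℕ) : ℕ → List Bool
  | 0 => [true]
  | 1 => [false]
  | n+2 => (List.replicate (d n) (stdSeq d (n+1))).flatten ++ stdSeq d n

def stdInf (d : ℕ → ℕ) : ℕ → Bool := fun i => (stdSeq d (i+2)).getD i false

def IsStandardWord (s : List Bool) : Prop :=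
  ∃ d : ℕ → ℕ, (∀ n, 1 ≤ n → 1 ≤ d n) ∧ ∃ m, s = stdSeq d m

def IsCentral (u : List Bool) : Prop := ∃ x y : Bool, x ≠ y ∧ IsStandardWord (u ++ [x, y])

def LeftSpecial (u w : List Bool) : Prop := (false :: u) <:+: w ∧ (true :: u) <:+: w

def RightSpecial (u w : List Bool) : Prop := (u ++ [false]) <:+: w ∧ (u ++ [true]) <:+: w

def IsSemicentral (v : List Bool) : Prop :=
  ∃ u : List Bool,
    (u <+: v ∧ RepeatedIn u v ∧ ∀ z, z <+: v → RepeatedIn z v → z.length ≤ u.length) ∧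
    (u <:+ v ∧ RepeatedIn u v ∧ ∀ z, z <:+ v → RepeatedIn z v → z.length ≤ u.length) ∧
    (LeftSpecial u v ∧ ∀ z, LeftSpecial z v → z.length ≤ u.length ∧ (z.length = u.length → z = u)) ∧
    (RightSpecial u v ∧ ∀ z, RightSpecial z v → z.length ≤ u.length ∧ (z.length = u.length → z = u))

def contFront : List ℕ → ℕ
  | [] => 1
  | [x] => x
  | x :: y :: l => x * contFront (y :: l) + contFront l

def paperK (l : List ℕ) : ℕ := contFront l.reverse

noncomputable def lbl (u : List α) : ℕ := sSup {n | ∃ v, IsBorder v u ∧ v.length = n}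

noncomputable def Bp (w : List α) (i : ℕ) : ℕ :=
  (Finset.range (i+1)).sup fun j => lbl (w.take j)

namespace List

theorem prefix_or_prefix_or_exists_ne : ∀ l₁ l₂ : List α,
    l₁ <+: l₂ ∨ l₂ <+: l₁ ∨ ∃ t a b r₁ r₂, a ≠ b ∧ l₁ = t ++ a :: r₁ ∧ l₂ = t ++ b :: r₂
  | [], _ => Or.inl nil_prefix
  | _ :: _, [] => Or.inr (Or.inl nil_prefix)
  | a :: l₁, b :: l₂ => by
    by_cases hab : a = b
    · subst hab
      rcases prefix_or_prefix_or_exists_ne l₁ l₂ with h | h | ⟨t, c, d, r₁, r₂, hcd, rfl, rfl⟩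
      · exact Or.inl (cons_prefix_cons.2 ⟨rfl, h⟩)
      · exact Or.inr (Or.inl (cons_prefix_cons.2 ⟨rfl, h⟩))
      · exact Or.inr (Or.inr ⟨a :: t, c, d, r₁, r₂, hcd, rfl, rfl⟩)
    · exact Or.inr (Or.inr ⟨[], a, b, l₁, l₂, hab, rfl, rfl⟩)

theorem suffix_or_suffix_or_exists_ne (l₁ l₂ : List α) :
    l₁ <:+ l₂ ∨ l₂ <:+ l₁ ∨ ∃ t a b r₁ r₂, a ≠ b ∧ l₁ = r₁ ++ a :: t ∧ l₂ = r₂ ++ b :: t := by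
  rcases prefix_or_prefix_or_exists_ne l₁.reverse l₂.reverse with h | h |
    ⟨t, a, b, r₁, r₂, hab, h₁, h₂⟩
  · exact Or.inl (reverse_prefix.1 h)
  · exact Or.inr (Or.inl (reverse_prefix.1 h))
  · refine Or.inr (Or.inr ⟨t.reverse, a, b, r₁.reverse, r₂.reverse, hab, ?_, ?_⟩)
    · simpa using congrArg reverse h₁
    · simpa using congrArg reverse h₂

end List

theorem IsBorder.length_lt {u w : List α} (h : IsBorder u w) : u.length < w.length :=
  lt_of_le_of_ne h.1.length_le fun hl => h.2.2 (h.1.eq_of_length hl)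

theorem IsBorder.prefix_of_concat {u w : List α} {x : α} (h : IsBorder u (w ++ [x])) : u <+: w :=
  (List.prefix_concat_iff.1 h.1).resolve_left h.2.2

theorem exists_isBorder_length_max {w : List α} (hw : w ≠ []) :
    ∃ v, IsBorder v w ∧ ∀ u, IsBorder u w → u.length ≤ v.length := by
  obtain ⟨v, hv, hmax⟩ := (w.inits.toFinset.filter (IsBorder · w)).exists_max_image List.length
    ⟨[], Finset.mem_filter.2 ⟨by simp, List.nil_prefix, List.nil_suffix, hw.symm⟩⟩
  simp only [Finset.mem_filter, List.mem_toFinset, List.mem_inits] at hv hmax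
  exact ⟨v, hv.2, fun u hu => hmax u ⟨hu.1, hu⟩⟩

theorem internalOcc_nil {w : List α} (h : 2 ≤ w.length) : InternalOcc [] w := by
  match w, h with
  | a :: b :: t, _ => exact ⟨[a], b :: t, by simp, by simp, by simp⟩

theorem internalOcc_concat_of_prefix_of_suffix {u v w : List α} (x : α) (hu : u <+: v)
    (hv : v <:+ w) (hvw : v.length < w.length) : InternalOcc u (w ++ [x]) := by
  obtain ⟨q, rfl⟩ := hv
  obtain ⟨r, rfl⟩ := hu
  refine ⟨q, r ++ [x], ?_, by simp, by simp⟩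
  rintro rfl
  simp at hvw

theorem internalOcc_of_isBorder_concat_of_length_le {w u v : List α} {x y : α} (hw : w ≠ [])
    (hxy : x ≠ y) (hu : IsBorder u (w ++ [x])) (hv : IsBorder v (w ++ [y]))
    (huv : u.length ≤ v.length) : InternalOcc u (w ++ [x]) := by
  rcases eq_or_ne u [] with rfl | hune
  · exact internalOcc_nil (by simpa [Nat.one_le_iff_ne_zero] using hw)
  obtain ⟨u₀, rfl, -⟩ := (List.suffix_concat_iff.1 hu.2.1).resolve_left hune
  obtain ⟨v₀, rfl, hv₀⟩ :=
    (List.suffix_concat_iff.1 hv.2.1).resolve_left (by rintro rfl; simp at huv)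
  have hupre := hu.prefix_of_concat
  have hvpre := hv.prefix_of_concat
  have hvlen := hvpre.length_le
  simp only [List.length_append, List.length_singleton] at huv hvlen
  by_cases hlen : (u₀ ++ [x]).length ≤ v₀.length
  · exact internalOcc_concat_of_prefix_of_suffix x
      (List.prefix_of_prefix_length_le hupre ((List.prefix_append _ _).trans hvpre) hlen) hv₀
      (by omega)
  · have hlen' : (u₀ ++ [x]).length = (v₀ ++ [y]).length := by
      simp only [List.length_append, List.length_singleton] at hlen ⊢
      omega
    have heq := (List.prefix_of_prefix_length_le hupre hvpre hlen'.le).eq_of_length hlen'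
    exact absurd (List.singleton_inj.1 (List.append_inj' heq rfl).2) hxy

theorem not_closedWord_concat_of_ne {w : List α} {x y : α} (hw : w ≠ []) (hxy : x ≠ y)
    (hx : ClosedWord (w ++ [x])) : ¬ ClosedWord (w ++ [y]) := by
  rintro (h | ⟨v, hv, hv'⟩)
  · simp at h
  rcases hx with h | ⟨u, hu, hu'⟩
  · simp at h
  rcases le_total u.length v.length with h | h
  · exact hu' (internalOcc_of_isBorder_concat_of_length_le hw hxy hu hv h)
  · exact hv' (internalOcc_of_isBorder_concat_of_length_le hw hxy.symm hv hu h)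

theorem BalancedWord.mono {u w : List Bool} (hw : BalancedWord w) (h : u <:+: w) :
    BalancedWord u :=
  fun a b ha hb hl => hw a b (ha.trans h) (hb.trans h) hl

theorem BalancedWord.eq_of_cons_append_infix {w t : List Bool} {a b : Bool} (hw : BalancedWord w)
    (ha : a :: t ++ [a] <:+: w) (hb : b :: t ++ [b] <:+: w) : a = b := by
  have := hw _ _ ha hb (by simp)
  cases a <;> cases b <;> simp [List.count_append] at this ⊢ <;> omega

theorem rightSpecial_of_ne {u w : List Bool} {a b : Bool} (hab : a ≠ b) (ha : u ++ [a] <:+: w)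
    (hb : u ++ [b] <:+: w) : RightSpecial u w := by
  cases a <;> cases b <;> simp_all [RightSpecial]

theorem RightSpecialSturmian.isSuffix_of_rightSpecial {w u : List Bool}
    (hw : RightSpecialSturmian w) (hu : RightSpecial u w) : u <:+ w := by
  by_contra hsuf
  have hlen : u.length < w.length := by simpa using hu.1.length_le
  set s := w.drop (w.length - u.length)
  have hs : s <:+ w := List.drop_suffix _ _
  have hslen : s.length = u.length := by simp only [s, List.length_drop]; omega
  rcases List.suffix_or_suffix_or_exists_ne u s with h | h |
    ⟨t, a, b, r₁, r₂, hab, hu', hs'⟩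
  · exact hsuf ((h.eq_of_length hslen.symm) ▸ hs)
  · exact hsuf ((h.eq_of_length hslen) ▸ hs)
  · have hua : u ++ [a] <:+: w := by cases a; exacts [hu.1, hu.2]
    have ha : a :: t ++ [a] <:+: w ++ [b] :=
      (List.IsSuffix.isInfix ⟨r₁, by simp [hu']⟩).trans
        (hua.trans (List.prefix_append w [b]).isInfix)
    obtain ⟨q, hq⟩ := hs
    have hbs : b :: t ++ [b] <:+ s ++ [b] := ⟨r₂, by simp [hs']⟩
    have hb : b :: t ++ [b] <:+: w ++ [b] := (hbs.trans ⟨q, by simp [← hq]⟩).isInfix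
    exact hab ((hw b).eq_of_cons_append_infix ha hb)

theorem RightSpecialSturmian.exists_isBorder_of_prefix_of_eq_append {w B p s : List Bool}
    (hw : RightSpecialSturmian w) (hB : B <+: w) (hocc : p ++ B ++ s = w) (hp : p ≠ []) :
    ∃ u, IsBorder u w ∧ B.length ≤ u.length := by
  obtain ⟨r, hr⟩ := hB
  have hplen : 0 < p.length := List.length_pos_iff.2 hp
  have hwlen : w.length = p.length + B.length + s.length := by
    simp only [← hocc, List.length_append]
  rcases List.prefix_or_prefix_or_exists_ne r s with h | h |
    ⟨t, a, b, r₁, r₂, hab, rfl, rfl⟩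
  · have := ((List.prefix_append_right_inj B).2 h).length_le
    simp only [hr, List.length_append] at this
    omega
  · have hpre : B ++ s <+: w := hr ▸ (List.prefix_append_right_inj B).2 h
    refine ⟨B ++ s, ⟨hpre, ⟨p, by simp [← hocc]⟩, fun h => ?_⟩, by simp⟩
    have := congrArg List.length h
    simp only [List.length_append] at this
    omega
  · have hA : RightSpecial (B ++ t) w := rightSpecial_of_ne hab
      (List.IsPrefix.isInfix ⟨r₁, by simp [← hr]⟩)
      ⟨p, r₂, by simp [← hocc]⟩
    refine ⟨B ++ t,
      ⟨⟨a :: r₁, by simp [← hr]⟩, hw.isSuffix_of_rightSpecial hA, fun h => ?_⟩,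
      by simp⟩
    simpa [← hr] using congrArg List.length h

theorem RightSpecialSturmian.exists_closedWord_concat {w : List Bool}
    (hw : RightSpecialSturmian w) (hne : w ≠ []) : ∃ z, ClosedWord (w ++ [z]) := by
  obtain ⟨v, hv, hmax⟩ := exists_isBorder_length_max hne
  have hvw := hv.length_lt
  have hpre : v ++ [w[v.length]] <+: w := by
    have h := List.take_append_getElem hvw
    rw [← List.prefix_iff_eq_take.1 hv.1] at h
    exact h ▸ List.take_prefix _ _
  obtain ⟨q, hq⟩ := hv.2.1
  refine ⟨w[v.length], Or.inr ⟨v ++ [w[v.length]], ⟨hpre.trans (List.prefix_append _ _),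
    ⟨q, by simp [← hq]⟩, fun h => by simpa [hvw.ne] using congrArg List.length h⟩, ?_⟩⟩
  rintro ⟨p, s, hp, hs, heq⟩
  obtain ⟨s, c, rfl⟩ := (List.eq_nil_or_concat' s).resolve_left hs
  have hocc : p ++ (v ++ [w[v.length]]) ++ s = w :=
    (List.append_inj' (heq.trans (List.append_assoc _ _ _).symm) rfl).1.symm
  obtain ⟨u, hu, hlen⟩ := hw.exists_isBorder_of_prefix_of_eq_append hpre hocc hp
  have := hmax u hu
  simp only [List.length_append, List.length_singleton] at hlen
  omega

theorem ClosedWord.map {β : Type*} {f : α → β} (hf : Function.Injective f) {w : List α}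
    (hw : ClosedWord w) : ClosedWord (w.map f) := by
  rcases hw with rfl | ⟨u, hu, hu'⟩
  · exact Or.inl rfl
  refine Or.inr ⟨u.map f, ⟨hu.1.map f, hu.2.1.map f,
    fun h => hu.2.2 (List.map_injective_iff.2 hf h)⟩, ?_⟩
  rintro ⟨p, s, hp, hs, heq⟩
  obtain ⟨l, s', rfl, hl, rfl⟩ := List.map_eq_append_iff.1 heq
  obtain ⟨p', m, rfl, rfl, hm⟩ := List.map_eq_append_iff.1 hl
  cases List.map_injective_iff.2 hf hm
  exact hu' ⟨p', s', by simpa using hp, by simpa using hs, rfl⟩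

theorem closedWord_map_iff {f : α → α} (hf : Function.Involutive f) (w : List α) :
    ClosedWord (w.map f) ↔ ClosedWord w :=
  ⟨fun h => by simpa [List.map_map, hf.comp_self] using h.map hf.injective,
    ClosedWord.map hf.injective⟩

theorem ocL_map {f : α → α} (hf : Function.Involutive f) (w : List α) :
    ocL (w.map f) = ocL w := by
  simp [ocL, ← List.map_take, closedWord_map_iff hf]

theorem BalancedWord.map_not {w : List Bool} (hw : BalancedWord w) :
    BalancedWord (w.map not) := by
  have hcount (l : List Bool) : (l.map not).count true = l.count false :=
    List.count_map_of_injective l not Bool.involutive_not.injective false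
  intro u v hu hv hlen
  have h := hw (u.map not) (v.map not)
    (by simpa [List.map_map, Bool.involutive_not.comp_self] using hu.map not)
    (by simpa [List.map_map, Bool.involutive_not.comp_self] using hv.map not) (by simp [hlen])
  rw [hcount, hcount] at h
  have := List.count_false_add_count_true u
  have := List.count_false_add_count_true v
  omega

theorem length_ocL (w : List α) : (ocL w).length = w.length := by
  simp [ocL]

theorem ocL_concat (w : List α) (x : α) :
    ocL (w ++ [x]) = ocL w ++ [if ClosedWord (w ++ [x]) then 1 else 0] := by
  simp only [ocL, List.length_append, List.length_singleton, List.range_succ, List.map_append,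
    List.map_singleton, List.take_of_length_le (by simp : (w ++ [x]).length ≤ w.length + 1)]
  congr 1
  refine List.map_congr_left fun i hi => ?_
  rw [List.take_append_of_le_length (by simp only [List.mem_range] at hi; omega)]

theorem eq_of_ocL_concat_eq {w : List Bool} {x y : Bool} (hne : w ≠ [])
    (hx : BalancedWord (w ++ [x])) (hy : BalancedWord (w ++ [y]))
    (h : ocL (w ++ [x]) = ocL (w ++ [y])) : x = y := by
  have hclosed : ClosedWord (w ++ [x]) ↔ ClosedWord (w ++ [y]) := by
    rw [ocL_concat, ocL_concat] at h
    have := (List.append_inj' h rfl).2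
    split_ifs at this <;> simp_all
  by_contra hxy
  have hxy' (z : Bool) : z = x ∨ z = y := by
    cases x <;> cases y <;> cases z <;> simp_all
  have hw : RightSpecialSturmian w := fun z => by rcases hxy' z with rfl | rfl <;> assumption
  obtain ⟨z, hz⟩ := hw.exists_closedWord_concat hne
  rcases hxy' z with rfl | rfl
  · exact not_closedWord_concat_of_ne hne hxy hz (hclosed.1 hz)
  · exact not_closedWord_concat_of_ne hne hxy (hclosed.2 hz) hz

theorem stmt12 (u v : List Bool) (hu : BalancedWord u) (hv : BalancedWord v)
    (h : ocL u = ocL v) : u = v ∨ u = v.map (fun c => !c) := by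
  induction u using List.reverseRecOn generalizing v with
  | nil => simpa [length_ocL, eq_comm] using congrArg List.length h
  | append_singleton u x ih =>
    obtain ⟨v, y, rfl⟩ := (List.eq_nil_or_concat' v).resolve_left <| by
      rintro rfl
      simpa [length_ocL] using congrArg List.length h
    have hpre : ocL u = ocL v := by
      rw [ocL_concat, ocL_concat] at h
      exact (List.append_inj' h rfl).1
    rcases eq_or_ne u [] with rfl | hne
    · obtain rfl : v = [] := by simpa [length_ocL, eq_comm] using congrArg List.length hpre
      cases x <;> cases y <;> simp
    rcases ih v (hu.mono (List.prefix_append _ _).isInfix)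
      (hv.mono (List.prefix_append _ _).isInfix) hpre with rfl | rfl
    · exact Or.inl (by rw [eq_of_ocL_concat_eq hne hu hv h])
    · have hv' : BalancedWord (v.map not ++ [!y]) := by simpa using hv.map_not
      have h' : ocL (v.map not ++ [x]) = ocL (v.map not ++ [!y]) := by
        simpa [ocL_map Bool.involutive_not] using
          h.trans (ocL_map Bool.involutive_not (v ++ [y])).symm
      simp [eq_of_ocL_concat_eq (by simpa using hne) hu hv' h']
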